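/- arXiv:0708.3576 — 2 statements merged into one kernel-verified Lean document; each statement's English description precedes it below -/
import Mathlib

section
/- Let I ⊆ k[x,y] be an ideal with Lt(I) = E, where Lt denotes the leading-term ideal for the lexicographic order with x > y, and E is the monomial ideal associated to (m_0,…,m_t). Let f_0,…,f_t ∈ I with Lt(f_i) = x^{t-i}y^{m_i} and leading coefficient 1. Then for every f ∈ I with Lt(f) = x^{t-i}y^b for some 0 ≤ i ≤ t, there exist polynomials g_i,…,g_t ∈ k[y] with deg g_i = b - m_i such that f + g_i f_i + ⋯ + g_t f_t = 0. -/
open MvPolynomial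
open scoped Classical

noncomputable section
namespace CV

variable {k : Type*} [Field k]

/-- `R k = k[x,y]` with `x = X 0`, `y = X 1`. -/
abbrev Rk (k : Type*) [Field k] := MvPolynomial (Fin 2) k

/-- The exponent of the lex-leading term of `f` (lex order with `x > y`). -/
def ltExp (f : Rk k) : Fin 2 →₀ ℕ :=
  if h : f = 0 then 0
  else ofLex ((f.support.image (toLex : (Fin 2 →₀ ℕ) → Lex (Fin 2 →₀ ℕ))).max'
    (Finset.image_nonempty.mpr (Finset.nonempty_iff_ne_empty.mpr (mt MvPolynomial.support_eq_empty.mp h))))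

/-- Leading coefficient. -/
def lc (f : Rk k) : k := coeff (ltExp f) f

/-- Leading term. -/
def lt (f : Rk k) : Rk k := monomial (ltExp f) (lc f)

/-- The leading term ideal `Lt(I)`. -/
def ltIdeal (I : Ideal (Rk k)) : Ideal (Rk k) :=
  Ideal.span { g | ∃ f ∈ I, f ≠ 0 ∧ g = lt f }

/-- The monomial ideal `E` associated to the data `(m_0, …, m_t)`:
`E = (x^t, x^{t-1}y^{m_1}, …, y^{m_t})`. -/
def Emon (t : ℕ) (m : Fin (t+1) → ℕ) : Ideal (Rk k) :=
  Ideal.span (Set.range fun i : Fin (t+1) => (X 0 : Rk k) ^ (t - (i : ℕ)) * X 1 ^ (m i))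

/-- The matrix `M_0(E)` with `y^{d_i}` on the diagonal and `-x` on the subdiagonal. -/
def M0 (t : ℕ) (m : Fin (t+1) → ℕ) : Matrix (Fin (t+1)) (Fin t) (Rk k) :=
  fun a b =>
    if a = b.castSucc then (X 1 : Rk k) ^ (m b.succ - m b.castSucc)
    else if a = b.succ then - X 0 else 0

/-- The signed maximal minor of `M` obtained by deleting the `(i+1)`-st row,
with sign `(-1)^{t-i}`. -/
def sminor {t : ℕ} (M : Matrix (Fin (t+1)) (Fin t) (Rk k)) (i : Fin (t+1)) : Rk k :=
  (-1) ^ (t - (i : ℕ)) * (M.submatrix i.succAbove id).det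

/-- The ideal of maximal minors of a `(t+1) × t` matrix. -/
def minorsIdeal {t : ℕ} (M : Matrix (Fin (t+1)) (Fin t) (Rk k)) : Ideal (Rk k) :=
  Ideal.span (Set.range (sminor M))

/-- Inclusion `k[y] → k[x,y]`. -/
def toY : Polynomial k →ₐ[k] Rk k := Polynomial.aeval (X 1 : Rk k)

/-- Membership in `T_0(E)`: `(t+1) × t` matrices `N = (n_{ij})` over `k[y]` with
`n_{ij} = 0` for `i < j` and `deg n_{ij} < d_j`. -/
def inT0 (t : ℕ) (m : Fin (t+1) → ℕ) (N : Matrix (Fin (t+1)) (Fin t) (Polynomial k)) : Prop :=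
  ∀ (a : Fin (t+1)) (b : Fin t),
    (((a : ℕ) < (b : ℕ)) → N a b = 0) ∧
    (N a b).degree < ((m b.succ - m b.castSucc : ℕ) : WithBot ℕ)

/-- The map `φ` sending a matrix `N` to the ideal of maximal minors of `M_0(E) + N`. -/
def phi (t : ℕ) (m : Fin (t+1) → ℕ) (N : Matrix (Fin (t+1)) (Fin t) (Polynomial k)) :
    Ideal (Rk k) :=
  minorsIdeal (M0 t m + N.map (toY : Polynomial k →ₐ[k] Rk k))

/-- A homogeneous ideal: stable under taking homogeneous components. -/
def isHomog (I : Ideal (Rk k)) : Prop :=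
  ∀ f ∈ I, ∀ n : ℕ, homogeneousComponent n f ∈ I


/-- The degree-`j` graded piece of an ideal, as a `k`-subspace. -/
def Ideg (I : Ideal (Rk k)) (j : ℕ) : Submodule k (Rk k) :=
  (Submodule.restrictScalars k I) ⊓ homogeneousSubmodule (Fin 2) k j

/-- The number of minimal generators of degree `j` of a homogeneous ideal:
`β_{0,j}(I) = dim_k I_j - dim_k ((x,y)·I)_j`. -/
def beta0 (I : Ideal (Rk k)) (j : ℕ) : ℕ :=
  Module.finrank k (Ideg I j) -
    Module.finrank k (Ideg (Ideal.span {(X 0 : Rk k), X 1} * I) j)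

end CV


open CV

section Helpers

variable {k : Type*} [Field k]

lemma ltExp_mem {f : Rk k} (hf : f ≠ 0) : ltExp f ∈ f.support := by
  rw [ltExp, dif_neg hf]
  obtain ⟨d, hd, hde⟩ := Finset.mem_image.mp
    ((f.support.image (toLex : (Fin 2 →₀ ℕ) → Lex (Fin 2 →₀ ℕ))).max'_mem
      (Finset.image_nonempty.mpr (Finset.nonempty_iff_ne_empty.mpr (mt MvPolynomial.support_eq_empty.mp hf))))
  rw [← hde]
  exact hd

lemma lc_ne_zero {f : Rk k} (hf : f ≠ 0) : lc f ≠ 0 :=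
  mem_support_iff.mp (ltExp_mem hf)

lemma le_ltExp {f : Rk k} (hf : f ≠ 0) {d : Fin 2 →₀ ℕ} (hd : d ∈ f.support) :
    toLex d ≤ toLex (ltExp f) := by
  rw [ltExp, dif_neg hf]
  exact Finset.le_max' _ _ (Finset.mem_image_of_mem _ hd)

lemma ltExp_unique {f : Rk k} {e : Fin 2 →₀ ℕ} (h1 : coeff e f ≠ 0)
    (h2 : ∀ d ∈ f.support, toLex d ≤ toLex e) : ltExp f = e := by
  have hf : f ≠ 0 := fun h => h1 (by simp [h])
  have he : e ∈ f.support := mem_support_iff.mpr h1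
  exact toLex.injective (le_antisymm (h2 _ (ltExp_mem hf)) (le_ltExp hf he))

lemma fin2_decomp (d : Fin 2 →₀ ℕ) :
    d = Finsupp.single 0 (d 0) + Finsupp.single 1 (d 1) := by
  ext j
  fin_cases j <;> simp [Finsupp.single_apply]

lemma lex_le_fst {d e : Fin 2 →₀ ℕ} (h : toLex d ≤ toLex e) : d 0 ≤ e 0 := by
  rcases (le_iff_eq_or_lt.mp h).imp id Finsupp.Lex.lt_iff.mp with h | ⟨i, hj, hi⟩
  · have : d = e := toLex.injective h
    rw [this]
  · fin_cases i
    · exact le_of_lt hi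
    · exact le_of_eq (hj 0 (by decide))

lemma lex_lt_snd {d e : Fin 2 →₀ ℕ} (h : toLex d < toLex e) (h0 : d 0 = e 0) :
    d 1 < e 1 := by
  rcases Finsupp.Lex.lt_iff.mp h with ⟨i, hj, hi⟩
  fin_cases i
  · exact absurd h0 (ne_of_lt hi)
  · exact hi

lemma ltExp_sub_lt {g h : Rk k} (hne : g - h ≠ 0) (he : ltExp g = ltExp h)
    (hc : lc g = lc h) (hg : g ≠ 0) (hh : h ≠ 0) :
    toLex (ltExp (g - h)) < toLex (ltExp g) := by
  have hmem := ltExp_mem hne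
  have h1 : coeff (ltExp (g - h)) (g - h) ≠ 0 := mem_support_iff.mp hmem
  have hle : toLex (ltExp (g - h)) ≤ toLex (ltExp g) := by
    rw [coeff_sub] at h1
    by_cases hcg : coeff (ltExp (g - h)) g ≠ 0
    · exact le_ltExp hg (mem_support_iff.mpr hcg)
    · push_neg at hcg
      have h2 : coeff (ltExp (g - h)) h ≠ 0 := by
        intro h'
        exact h1 (by rw [hcg, h', sub_zero])
      rw [he]
      exact le_ltExp hh (mem_support_iff.mpr h2)
  refine lt_of_le_of_ne hle fun heq => ?_
  have h3 : ltExp (g - h) = ltExp g := toLex.injective heq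
  apply h1
  rw [h3, coeff_sub]
  have h4 : coeff (ltExp g) h = lc h := by rw [he]; rfl
  rw [h4, ← hc]
  exact sub_self _

lemma ltExp_monomial_mul {d : Fin 2 →₀ ℕ} {a : k} (ha : a ≠ 0) {f : Rk k} (hf : f ≠ 0) :
    ltExp (monomial d a * f) = d + ltExp f := by
  apply ltExp_unique
  · rw [coeff_monomial_mul]
    exact mul_ne_zero ha (lc_ne_zero hf)
  · intro e he
    have hmem := support_mul (monomial d a) f he
    obtain ⟨u, hu, v, hv, rfl⟩ := Finset.mem_add.mp hmem
    have hu' : u = d := by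
      rw [support_monomial, if_neg ha] at hu
      exact Finset.mem_singleton.mp hu
    rw [hu']
    exact add_le_add_right (le_ltExp hf hv) (toLex d)

lemma lc_monomial_mul {d : Fin 2 →₀ ℕ} {a : k} (ha : a ≠ 0) {f : Rk k} (hf : f ≠ 0) :
    lc (monomial d a * f) = a * lc f := by
  rw [lc, ltExp_monomial_mul ha hf, coeff_monomial_mul]
  rfl

lemma mem_Emon_iff {t : ℕ} {m : Fin (t + 1) → ℕ} {p : Rk k} :
    p ∈ Emon (k := k) t m ↔ ∀ d ∈ p.support, ∃ j : Fin (t + 1),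
      Finsupp.single (0 : Fin 2) (t - (j : ℕ)) + Finsupp.single (1 : Fin 2) (m j) ≤ d := by
  have hset : (Set.range fun i : Fin (t+1) => (X 0 : Rk k) ^ (t - (i : ℕ)) * X 1 ^ (m i))
      = (fun s => monomial s (1 : k)) ''
        (Set.range fun j : Fin (t + 1) =>
          Finsupp.single (0 : Fin 2) (t - (j : ℕ)) + Finsupp.single (1 : Fin 2) (m j)) := by
    rw [← Set.range_comp]
    refine congrArg Set.range (funext fun j => ?_)
    show (X 0 : Rk k) ^ (t - (j : ℕ)) * X 1 ^ (m j) = monomial _ 1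
    rw [X_pow_eq_monomial, X_pow_eq_monomial, monomial_mul, one_mul]
  rw [Emon, hset, mem_ideal_span_monomial_image]
  simp only [Set.mem_range, exists_exists_eq_and]

end Helpers

/-- reduction of elements of `I` against `f_0,…,f_t`. -/
theorem stmt_5 (k : Type*) [Field k] (t : ℕ) (m : Fin (t + 1) → ℕ) (h0 : m 0 = 0)
    (hmono : Monotone m) (hpos : ∀ i : Fin (t + 1), i ≠ 0 → 0 < m i)
    (I : Ideal (CV.Rk k)) (hI : CV.ltIdeal I = CV.Emon (k := k) t m)
    (f : Fin (t + 1) → CV.Rk k) (hfI : ∀ i, f i ∈ I) (hfne : ∀ i, f i ≠ 0)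
    (hlt : ∀ i, CV.ltExp (f i)
        = Finsupp.single (0 : Fin 2) (t - (i : ℕ)) + Finsupp.single (1 : Fin 2) (m i))
    (hlc : ∀ i, CV.lc (f i) = 1) :
    ∀ g ∈ I, g ≠ 0 → ∀ (i : Fin (t + 1)) (b : ℕ),
      CV.ltExp g = Finsupp.single (0 : Fin 2) (t - (i : ℕ)) + Finsupp.single (1 : Fin 2) b →
      ∃ gs : Fin (t + 1) → Polynomial k,
        (∀ j, j < i → gs j = 0) ∧
        m i ≤ b ∧ gs i ≠ 0 ∧ (gs i).natDegree = b - m i ∧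
        g + ∑ j, CV.toY (gs j) * f j = 0 := by
  suffices H : ∀ e : Lex (Fin 2 →₀ ℕ), ∀ g : Rk k, g ∈ I → g ≠ 0 →
      ∀ (i : Fin (t + 1)) (b : ℕ), toLex (CV.ltExp g) = e →
      CV.ltExp g = Finsupp.single (0 : Fin 2) (t - (i : ℕ)) + Finsupp.single (1 : Fin 2) b →
      ∃ gs : Fin (t + 1) → Polynomial k,
        (∀ j, j < i → gs j = 0) ∧
        m i ≤ b ∧ gs i ≠ 0 ∧ (gs i).natDegree = b - m i ∧
        g + ∑ j, CV.toY (gs j) * f j = 0 by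
    intro g hgI hg i b hexp
    exact H _ g hgI hg i b rfl hexp
  intro e
  induction e using WellFoundedLT.induction with
  | _ e IH =>
  intro g hgI hg i b he hexp
  -- step 1 : m i ≤ b
  have hlt_mem : CV.lt g ∈ CV.Emon (k := k) t m := by
    rw [← hI]
    exact Ideal.subset_span ⟨g, hgI, hg, rfl⟩
  have hsupp_lt : (CV.lt g).support = {CV.ltExp g} := by
    rw [CV.lt, support_monomial, if_neg (lc_ne_zero hg)]
  obtain ⟨j, hj⟩ := mem_Emon_iff.mp hlt_mem (CV.ltExp g)
    (by rw [hsupp_lt]; exact Finset.mem_singleton_self _)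
  rw [hexp] at hj
  have hj0 : t - (j : ℕ) ≤ t - (i : ℕ) := by
    have := hj 0
    simpa [Finsupp.single_apply] using this
  have hj1 : m j ≤ b := by
    have := hj 1
    simpa [Finsupp.single_apply] using this
  have hij : i ≤ j := by
    rw [Fin.le_def]
    have hi : (i:ℕ) ≤ t := Nat.lt_succ_iff.mp i.2
    have hjle : (j:ℕ) ≤ t := Nat.lt_succ_iff.mp j.2
    omega
  have hmb : m i ≤ b := le_trans (hmono hij) hj1
  -- step 2 : the reduction polynomial
  set c : k := CV.lc g with hc
  have hcne : c ≠ 0 := lc_ne_zero hg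
  set n : ℕ := b - m i with hn
  set h : Rk k := monomial (Finsupp.single (1 : Fin 2) n) c * f i with hh
  have hhne : h ≠ 0 :=
    mul_ne_zero (fun hm => hcne (by simpa using congrArg (coeff (Finsupp.single 1 n)) hm))
      (hfne i)
  have hhexp : CV.ltExp h = CV.ltExp g := by
    rw [hh, ltExp_monomial_mul hcne (hfne i), hlt i, hexp]
    ext a
    fin_cases a <;> simp [Finsupp.single_apply] <;> omega
  have hhlc : CV.lc h = c := by
    rw [hh, lc_monomial_mul hcne (hfne i), hlc i, mul_one]
  have hhI : h ∈ I := Ideal.mul_mem_left _ _ (hfI i)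
  set p : Polynomial k := -(Polynomial.C c * Polynomial.X ^ n) with hp
  have hpne : p ≠ 0 := by
    simp [hp, hcne]
  have hpdeg : p.natDegree = n := by
    rw [hp, Polynomial.natDegree_neg, Polynomial.natDegree_C_mul_X_pow n c hcne]
  have htoYp : CV.toY p = -(monomial (Finsupp.single (1 : Fin 2) n) c) := by
    rw [hp, CV.toY]
    simp only [map_neg, map_mul, map_pow, Polynomial.aeval_C, Polynomial.aeval_X]
    rw [X_pow_eq_monomial]
    rw [show (algebraMap k (Rk k)) c = C c from rfl, C_mul_monomial, mul_one]
  by_cases hg1 : g - h = 0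
  · -- g = h : done in one step
    refine ⟨fun j => if j = i then p else 0, fun j hji => if_neg (ne_of_lt hji), hmb,
      by simp [hpne], ?_, ?_⟩
    · show (if i = i then p else 0).natDegree = b - m i
      rw [if_pos rfl, hpdeg, hn]
    have hsum : ∑ j, CV.toY (if j = i then p else 0) * f j = CV.toY p * f i := by
      rw [Finset.sum_eq_single i]
      · rw [if_pos rfl]
      · intro j _ hji
        rw [if_neg hji, map_zero, zero_mul]
      · intro hnotmem
        exact absurd (Finset.mem_univ i) hnotmem
    rw [hsum, htoYp, neg_mul, ← hh, ← sub_eq_add_neg, hg1]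
  · -- recurse on g₁ = g - h
    set g₁ : Rk k := g - h with hg₁def
    have hg₁I : g₁ ∈ I := Ideal.sub_mem I hgI hhI
    have hltlt : toLex (CV.ltExp g₁) < toLex (CV.ltExp g) :=
      ltExp_sub_lt hg1 hhexp.symm (by rw [hhlc]) hg hhne
    -- decompose the new leading exponent
    set a : ℕ := CV.ltExp g₁ 0 with ha
    set b' : ℕ := CV.ltExp g₁ 1 with hb'
    have hafst : a ≤ t - (i : ℕ) := by
      have := lex_le_fst (le_of_lt hltlt)
      rwa [hexp, Finsupp.add_apply, Finsupp.single_apply, Finsupp.single_apply] at this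
      -- may need adjustment
    have hat : a ≤ t := le_trans hafst (Nat.sub_le t _)
    set i' : Fin (t + 1) := ⟨t - a, by omega⟩ with hi'
    have hti' : t - (i' : ℕ) = a := by
      simp only [hi']
      omega
    have hexp₁ : CV.ltExp g₁
        = Finsupp.single (0 : Fin 2) (t - (i' : ℕ)) + Finsupp.single (1 : Fin 2) b' := by
      rw [hti']
      exact fin2_decomp _
    have hii' : i ≤ i' := by
      rw [Fin.le_def]
      have hi : (i:ℕ) ≤ t := Nat.lt_succ_iff.mp i.2
      simp only [hi']
      omega
    have hb'b : i' = i → b' < b := by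
      intro hii
      have haeq : a = t - (i : ℕ) := by rw [← hti', hii]
      have h0eq : CV.ltExp g₁ 0 = CV.ltExp g 0 := by
        rw [hexp]
        simp only [Finsupp.add_apply, Finsupp.single_apply]
        simp only [show ((0:Fin 2) = 0) = True by simp, show ((1:Fin 2) = 0) = False by simp,
          if_true, if_false, add_zero]
        rw [← ha]
        exact haeq
      have h2 := lex_lt_snd hltlt h0eq
      rw [hexp] at h2
      simp only [Finsupp.add_apply, Finsupp.single_apply] at h2
      simp only [show ((0:Fin 2) = 1) = False by simp, show ((1:Fin 2) = 1) = True by simp,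
        if_true, if_false, zero_add] at h2
      rw [← hb'] at h2
      exact h2
    obtain ⟨gs', hgs'0, hmb', hgs'ne, hgs'deg, hgs'sum⟩ :=
      IH (toLex (CV.ltExp g₁)) (he ▸ hltlt) g₁ hg₁I hg1 i' b' rfl hexp₁
    refine ⟨fun j => gs' j + if j = i then p else 0, ?_, hmb, ?_, ?_, ?_⟩
    · intro j hji
      show gs' j + (if j = i then p else 0) = 0
      rw [hgs'0 j (lt_of_lt_of_le hji hii'), if_neg (ne_of_lt hji), add_zero]
    · -- gs i ≠ 0
      show gs' i + (if i = i then p else 0) ≠ 0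
      rw [if_pos rfl]
      intro habs
      have hco := congrArg (fun q => Polynomial.coeff q n) habs
      simp only [Polynomial.coeff_add, Polynomial.coeff_zero, hp, Polynomial.coeff_neg,
        Polynomial.coeff_C_mul, Polynomial.coeff_X_pow, if_pos rfl, mul_one] at hco
      have hgs'co : (gs' i).coeff n = 0 := by
        by_cases hii : i' = i
        · rw [hii] at hgs'deg hmb'
          apply Polynomial.coeff_eq_zero_of_natDegree_lt
          rw [hgs'deg]
          have hbb := hb'b hii
          omega
        · rw [hgs'0 i (lt_of_le_of_ne hii' (fun hx => hii hx.symm)), Polynomial.coeff_zero]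
      rw [hgs'co, zero_add] at hco
      exact hcne (by simpa using hco.symm)
    · -- natDegree
      show (gs' i + if i = i then p else 0).natDegree = b - m i
      rw [if_pos rfl]
      by_cases hii : i' = i
      · rw [hii] at hgs'deg hmb'
        have hd1 : (gs' i).natDegree < p.natDegree := by
          rw [hpdeg, hgs'deg]
          have hbb := hb'b hii
          omega
        rw [Polynomial.natDegree_add_eq_right_of_natDegree_lt hd1, hpdeg]
      · rw [hgs'0 i (lt_of_le_of_ne hii' (fun hx => hii hx.symm)), zero_add, hpdeg]
    · -- the sum vanishes
      show g + ∑ j, CV.toY (gs' j + if j = i then p else 0) * f j = 0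
      have hsplit : ∀ j : Fin (t + 1),
          CV.toY (gs' j + if j = i then p else 0) * f j
            = CV.toY (gs' j) * f j + (if j = i then CV.toY p * f j else 0) := by
        intro j
        by_cases hji : j = i <;> simp [hji, add_mul]
      simp only [hsplit, Finset.sum_add_distrib]
      have hsum2 : ∑ j, (if j = i then CV.toY p * f j else 0) = CV.toY p * f i := by
        rw [Finset.sum_eq_single i]
        · rw [if_pos rfl]
        · intro j _ hji
          rw [if_neg hji]
        · intro hnotmem
          exact absurd (Finset.mem_univ i) hnotmem
      rw [hsum2, htoYp, neg_mul, ← hh]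
      have : g + (∑ j, CV.toY (gs' j) * f j + -h) = g₁ + ∑ j, CV.toY (gs' j) * f j := by
        rw [hg₁def]
        ring
      rw [this, hgs'sum]
end
end

section
/- Let h(z) = 1 + 2z + ⋯ + c z^{c-1} + Σ_{j=c}^s h_j z^j with s+1 ≥ c ≥ h_c ≥ ⋯ ≥ h_s > 0 be the Hilbert series of a graded Artinian quotient of k[x,y], let p(z) = Σ_{i=0}^{s+1} p_i z^i = (1-z)h(z), and let L = L(h) be the lex-segment ideal with Hilbert series h. Then h_c + Σ_{j=c}^s p_j p_{j+1} = #S(L), where S(L) = {(i,j) : 1 ≤ j < i ≤ t+1, 0 ≤ u_{ij} < d_j} is defined via the data (m_0,…,m_t) of L, u_{ij} = m_j - m_{i-1} + i - j, d_j = m_j - m_{j-1}. -/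
open MvPolynomial
open scoped Classical

noncomputable section
open CV

namespace Stmt16Aux



open Finset

/-- count of indices `i ∈ [1,t]` with `e i = v`. -/
noncomputable def bfun (t : ℕ) (e : ℕ → ℕ) (v : ℕ) : ℕ :=
  ((Icc 1 t).filter fun i => e i = v).card

/-- count of indices `i ∈ [1,t]` with `e i ≤ n`. -/
noncomputable def Bfun (t : ℕ) (e : ℕ → ℕ) (n : ℕ) : ℕ :=
  ((Icc 1 t).filter fun i => e i ≤ n).card

lemma Bfun_le (t : ℕ) (e : ℕ → ℕ) (n : ℕ) : Bfun t e n ≤ t := by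
  calc ((Icc 1 t).filter fun i => e i ≤ n).card ≤ (Icc 1 t).card := card_filter_le _ _
    _ = t := by rw [Nat.card_Icc]; omega

lemma Bfun_succ (t : ℕ) (e : ℕ → ℕ) (j : ℕ) (hj : 1 ≤ j) :
    Bfun t e j = Bfun t e (j - 1) + bfun t e j := by
  unfold Bfun bfun
  rw [show ((Icc 1 t).filter fun i => e i ≤ j)
      = ((Icc 1 t).filter fun i => e i ≤ j - 1 ∨ e i = j) from
    filter_congr (fun x _ => by omega), filter_or]
  apply card_union_of_disjoint
  rw [Finset.disjoint_left]
  intro a ha hb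
  simp only [mem_filter] at ha hb
  omega

lemma fin_filter_card (t : ℕ) (P : ℕ → Prop) :
    (Finset.univ.filter fun i : Fin (t + 1) => i ≠ 0 ∧ P (i : ℕ)).card
      = ((Finset.Icc 1 t).filter P).card := by
  apply card_bij (fun (i : Fin (t+1)) _ => (i : ℕ))
  · intro a ha
    simp only [mem_filter, mem_univ, true_and] at ha
    simp only [mem_filter, mem_Icc]
    have h1 : (a : ℕ) ≠ 0 := fun h => ha.1 (Fin.ext (by simp [h]))
    exact ⟨⟨by omega, a.is_le⟩, ha.2⟩
  · intro a _ b _ hab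
    exact Fin.ext hab
  · intro b hb
    simp only [mem_filter, mem_Icc] at hb
    refine ⟨⟨b, by omega⟩, ?_, rfl⟩
    simp only [mem_filter, mem_univ, true_and]
    refine ⟨fun h => ?_, hb.2⟩
    have : (b : ℕ) = 0 := congrArg Fin.val h
    omega

lemma key (t : ℕ) (e : ℕ → ℕ) (ht : 1 ≤ t) (he0 : e 0 = t)
    (hmono : ∀ a b : ℕ, a ≤ b → b ≤ t → e a ≤ e b) :
    (((Icc 1 t) ×ˢ (Icc 1 t)).filter fun q : ℕ × ℕ =>
        q.2 ≤ q.1 ∧ e q.1 ≤ e q.2 + 1 ∧ e (q.2 - 1) < e q.1).card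
      = (t - Bfun t e t) + ∑ v ∈ Icc t (e t - 1), bfun t e v * bfun t e (v + 1) := by
  classical
  set SA := ((Icc 1 t) ×ˢ (Icc 1 t)).filter (fun q : ℕ × ℕ =>
      q.2 ≤ q.1 ∧ e q.1 = e q.2 ∧ e (q.2 - 1) < e q.2) with hSA
  set SB := ((Icc 1 t) ×ˢ (Icc 1 t)).filter (fun q : ℕ × ℕ => e q.1 = e q.2 + 1) with hSB
  have hunion : (((Icc 1 t) ×ˢ (Icc 1 t)).filter fun q : ℕ × ℕ =>
      q.2 ≤ q.1 ∧ e q.1 ≤ e q.2 + 1 ∧ e (q.2 - 1) < e q.1) = SA ∪ SB := by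
    ext q
    simp only [hSA, hSB, mem_union, mem_filter, mem_product, mem_Icc]
    constructor
    · rintro ⟨⟨h1, h2⟩, hle, hub, hlb⟩
      have := hmono q.2 q.1 hle h1.2
      rcases eq_or_lt_of_le this with he | he
      · exact Or.inl ⟨⟨h1, h2⟩, hle, he.symm, by omega⟩
      · exact Or.inr ⟨⟨h1, h2⟩, by omega⟩
    · rintro (⟨⟨h1, h2⟩, hle, heq, hlt⟩ | ⟨⟨h1, h2⟩, heq⟩)
      · exact ⟨⟨h1, h2⟩, hle, by omega, by omega⟩
      · have hle : q.2 ≤ q.1 := by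
          by_contra hc
          have := hmono q.1 q.2 (by omega) h2.2
          omega
        have := hmono (q.2 - 1) q.2 (by omega) h2.2
        exact ⟨⟨h1, h2⟩, hle, by omega, by omega⟩
  have hdisj : Disjoint SA SB := by
    rw [Finset.disjoint_left]
    intro q hq hq'
    simp only [hSA, hSB, mem_filter] at hq hq'
    omega
  have hA : SA.card = t - Bfun t e t := by
    have h1 : SA.card = ((Icc 1 t).filter fun i => t < e i).card := by
      apply card_bij (fun (q : ℕ × ℕ) _ => q.1)
      · intro q hq
        simp only [hSA, mem_filter, mem_product, mem_Icc] at hq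
        have h0le : e 0 ≤ e (q.2 - 1) := hmono 0 (q.2 - 1) (Nat.zero_le _) (by omega)
        simp only [mem_filter, mem_Icc]
        exact ⟨hq.1.1, by omega⟩
      · intro a ha b hb hab
        simp only [hSA, mem_filter, mem_product, mem_Icc] at ha hb
        have hE : e a.1 = e b.1 := by rw [hab]
        refine Prod.ext hab ?_
        rcases lt_trichotomy a.2 b.2 with hlt | heq | hgt
        · have := hmono a.2 (b.2 - 1) (by omega) (by omega)
          omega
        · exact heq
        · have := hmono b.2 (a.2 - 1) (by omega) (by omega)
          omega
      · intro i hi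
        simp only [mem_filter, mem_Icc] at hi
        set T := (Icc 1 t).filter fun j => e j = e i with hT
        have hiT : i ∈ T := mem_filter.mpr ⟨mem_Icc.mpr hi.1, rfl⟩
        have hne : T.Nonempty := ⟨i, hiT⟩
        set j0 := T.min' hne with hj0
        have hj0T : j0 ∈ T := T.min'_mem hne
        simp only [hT, mem_filter, mem_Icc] at hj0T
        have hj0i : j0 ≤ i := T.min'_le i hiT
        have hstep : e (j0 - 1) < e j0 := by
          rcases Nat.eq_or_lt_of_le (hmono (j0 - 1) j0 (by omega) (by omega)) with hc | hc
          · exfalso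
            by_cases h1 : j0 = 1
            · have : e 0 = e j0 := by rw [← hc, h1]
              omega
            · have hm : j0 - 1 ∈ T := by
                simp only [hT, mem_filter, mem_Icc]
                exact ⟨⟨by omega, by omega⟩, by omega⟩
              have := T.min'_le _ hm
              omega
          · exact hc
        refine ⟨(i, j0), ?_, rfl⟩
        simp only [hSA, mem_filter, mem_product, mem_Icc]
        exact ⟨⟨hi.1, hj0T.1⟩, hj0i, by omega, hstep⟩
    rw [h1]
    have h2 := card_filter_add_card_filter_not (s := Icc 1 t)
      (p := fun i => e i ≤ t)
    have h3 : ((Icc 1 t).filter fun i => t < e i)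
        = ((Icc 1 t).filter fun i => ¬ e i ≤ t) := filter_congr (fun x _ => by omega)
    have h4 : (Icc 1 t).card = t := by rw [Nat.card_Icc]; omega
    rw [h3]
    unfold Bfun
    omega
  have hB : SB.card = ∑ v ∈ Icc t (e t - 1), bfun t e v * bfun t e (v + 1) := by
    have hmaps : ∀ q ∈ SB, (fun q : ℕ × ℕ => e q.2) q ∈ Icc t (e t - 1) := by
      intro q hq
      simp only [hSB, mem_filter, mem_product, mem_Icc] at hq
      have h1 := hmono 0 q.2 (Nat.zero_le _) hq.1.2.2
      have h2 := hmono q.1 t hq.1.1.2 le_rfl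
      simp only [mem_Icc]
      omega
    rw [card_eq_sum_card_fiberwise hmaps]
    apply sum_congr rfl
    intro v _
    have hfib : SB.filter (fun q : ℕ × ℕ => e q.2 = v)
        = ((Icc 1 t).filter fun i => e i = v + 1) ×ˢ ((Icc 1 t).filter fun j => e j = v) := by
      ext q
      simp only [hSB, mem_filter, mem_product, mem_Icc]
      constructor
      · rintro ⟨⟨⟨ha, hb⟩, hq⟩, hv2⟩
        exact ⟨⟨ha, by omega⟩, hb, hv2⟩
      · rintro ⟨⟨ha, h1⟩, hb, h2⟩
        exact ⟨⟨⟨ha, hb⟩, by omega⟩, h2⟩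
    rw [hfib, card_product]
    unfold bfun
    ring
  rw [hunion, card_union_of_disjoint hdisj, hA, hB]


/-- extension of `m` to `ℕ`. -/
def Mext (t : ℕ) (m : Fin (t + 1) → ℕ) : ℕ → ℕ :=
  fun n => m ⟨min n t, Nat.lt_succ_of_le (min_le_right n t)⟩

/-- degree of the `i`-th generator. -/
def efun (t : ℕ) (m : Fin (t + 1) → ℕ) : ℕ → ℕ :=
  fun n => (t - n) + Mext t m n

lemma Mext_val (t : ℕ) (m : Fin (t + 1) → ℕ) (x : Fin (t + 1)) :
    Mext t m (x : ℕ) = m x := by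
  unfold Mext
  congr 1
  exact Fin.ext (min_eq_left x.is_le)

lemma Mext_add (t : ℕ) (m : Fin (t + 1) → ℕ) (hsm : StrictMono m) :
    ∀ d a, a + d ≤ t → Mext t m a + d ≤ Mext t m (a + d) := by
  intro d
  induction d with
  | zero => intro a _; simp
  | succ n ih =>
    intro a hle
    have h1 := ih a (by omega)
    have h2 : Mext t m (a + n) < Mext t m (a + n + 1) := by
      apply hsm
      rw [Fin.lt_def]
      simp only [Mext]
      omega
    rw [show a + (n + 1) = (a + n) + 1 from by omega]
    omega


end Stmt16Aux

open Finset Stmt16Aux in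
/-- Iarrobino's dimension formula `h_c + Σ_{j=c}^s p_j p_{j+1}` equals
`#S(L)` for the lex-segment ideal `L` with Hilbert function `h`. -/
theorem stmt_16 (k : Type*) [Field k] (t : ℕ) (ht : 1 ≤ t) (m : Fin (t + 1) → ℕ)
    (h0 : m 0 = 0) (hsm : StrictMono m)
    (h : ℕ → ℕ) (c s : ℕ) (hcs : c ≤ s + 1)
    (hinit : ∀ j, j < c → h j = j + 1)
    (htail : ∀ j, s < j → h j = 0)
    (hanti : AntitoneOn h (Set.Icc c s))
    (hhc : c ≤ s → h c ≤ c)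
    (hhs : c ≤ s → 0 < h s)
    (hHilb : ∀ n : ℕ, h n = (Finset.univ.filter fun i : Fin (t + 1) =>
        i ≠ 0 ∧ t - (i : ℕ) ≤ n ∧ n - (t - (i : ℕ)) < m i).card) :
    let p : ℕ → ℤ := fun j => if j = 0 then (h 0 : ℤ) else (h j : ℤ) - (h (j - 1) : ℤ)
    let u : Fin (t + 1) → Fin t → ℤ := fun a b =>
      (m b.succ : ℤ) - (m a : ℤ) + (a : ℕ) - (b : ℕ)
    let S : Finset (Fin (t + 1) × Fin t) := Finset.univ.filter fun q =>
      (q.2 : ℕ) < (q.1 : ℕ) ∧ 0 ≤ u q.1 q.2 ∧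
        u q.1 q.2 < (m q.2.succ : ℤ) - (m q.2.castSucc : ℤ)
    (h c : ℤ) + ∑ j ∈ Finset.Icc c s, p j * p (j + 1) = (S.card : ℤ) := by
  classical
  intro p u S
  set M := Mext t m with hMdef
  set e := efun t m with hedef
  have hmM : ∀ x : Fin (t + 1), M (x : ℕ) = m x := Mext_val t m
  have hMadd : ∀ d a, a + d ≤ t → M a + d ≤ M (a + d) := Mext_add t m hsm
  have hM0 : M 0 = 0 := by
    have h1 := hmM 0
    simpa [h0] using h1
  have heval : ∀ n, e n = (t - n) + M n := fun n => rfl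
  have he0 : e 0 = t := by rw [heval, hM0]; omega
  have heget : ∀ i, i ≤ t → t ≤ e i := by
    intro i hi
    have h1 := hMadd i 0 (by omega)
    rw [Nat.zero_add] at h1
    rw [heval]
    omega
  have hemono : ∀ a b, a ≤ b → b ≤ t → e a ≤ e b := by
    intro a b hab hbt
    have h1 := hMadd (b - a) a (by omega)
    rw [show a + (b - a) = b from by omega] at h1
    rw [heval, heval]
    omega
  have het : e t = M t := by rw [heval]; omega
  have hMt_ge : t ≤ M t := by rw [← het]; exact heget t le_rfl
  -- Hilbert function via e
  have hh : ∀ n, h n = ((Icc 1 t).filter fun i => t - i ≤ n ∧ n < e i).card := by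
    intro n
    rw [hHilb n]
    have step1 : (Finset.univ.filter fun i : Fin (t + 1) =>
          i ≠ 0 ∧ t - (i : ℕ) ≤ n ∧ n - (t - (i : ℕ)) < m i)
        = (Finset.univ.filter fun i : Fin (t + 1) =>
          i ≠ 0 ∧ (t - (i : ℕ) ≤ n ∧ n - (t - (i : ℕ)) < M (i : ℕ))) := by
      apply filter_congr
      intro i _
      simp only [hmM i]
    have step2 : (Finset.univ.filter fun i : Fin (t + 1) =>
          i ≠ 0 ∧ (t - (i : ℕ) ≤ n ∧ n - (t - (i : ℕ)) < M (i : ℕ))).card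
        = ((Icc 1 t).filter fun x : ℕ => t - x ≤ n ∧ n - (t - x) < M x).card := by
      apply card_bij (fun (i : Fin (t + 1)) _ => (i : ℕ))
      · intro a ha
        simp only [mem_filter, mem_univ, true_and] at ha
        simp only [mem_filter, mem_Icc]
        have h1 : (a : ℕ) ≠ 0 := fun hz => ha.1 (Fin.ext (by simp [hz]))
        exact ⟨⟨by omega, a.is_le⟩, ha.2⟩
      · intro a _ b _ hab
        exact Fin.ext hab
      · intro x hx
        simp only [mem_filter, mem_Icc] at hx
        refine ⟨⟨x, by omega⟩, ?_, rfl⟩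
        simp only [mem_filter, mem_univ, true_and]
        refine ⟨fun hz => ?_, hx.2⟩
        have : (x : ℕ) = 0 := congrArg Fin.val hz
        omega
    rw [step1, step2]
    apply congrArg
    apply filter_congr
    intro x _
    simp only [heval]
    omega
  -- h n = t - B n for n ≥ t - 1
  have hhB : ∀ n, t - 1 ≤ n → h n = t - Bfun t e n := by
    intro n hn
    rw [hh n]
    have h2 := card_filter_add_card_filter_not (s := Icc 1 t)
      (p := fun i => e i ≤ n)
    have h3 : ((Icc 1 t).filter fun i => t - i ≤ n ∧ n < e i)
        = ((Icc 1 t).filter fun i => ¬ e i ≤ n) := by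
      apply filter_congr
      intro x hx
      simp only [mem_Icc] at hx
      omega
    have h4 : (Icc 1 t).card = t := by rw [Nat.card_Icc]; omega
    rw [h3]
    unfold Bfun
    omega
  have hBle : ∀ n, Bfun t e n ≤ t := Bfun_le t e
  -- h n = n + 1 for n < t
  have hlt : ∀ n, n < t → h n = n + 1 := by
    intro n hn
    rw [hh n]
    have hset : ((Icc 1 t).filter fun i => t - i ≤ n ∧ n < e i) = Icc (t - n) t := by
      ext i
      simp only [mem_filter, mem_Icc]
      constructor
      · rintro ⟨⟨h1, h2⟩, h3, _⟩
        omega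
      · intro hi
        have := heget i (by omega)
        refine ⟨⟨by omega, by omega⟩, by omega, by omega⟩
    rw [hset, Nat.card_Icc]
    omega
  -- c = t
  have hct : c = t := by
    rcases lt_trichotomy c t with hc | hc | hc
    · exfalso
      have h1 := hlt c hc
      by_cases h2 : c ≤ s
      · have := hhc h2; omega
      · have := htail c (by omega)
        omega
    · exact hc
    · exfalso
      have h1 := hinit t hc
      have h2 := hhB t (by omega)
      have h3 := hBle t
      omega
  -- B n = t for n ≥ M t
  have hBall : ∀ n, M t ≤ n → Bfun t e n = t := by
    intro n hn
    unfold Bfun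
    rw [filter_true_of_mem, Nat.card_Icc]
    · omega
    · intro i hi
      simp only [mem_Icc] at hi
      have h1 := hMadd (t - i) i (by omega)
      rw [show i + (t - i) = t from by omega] at h1
      rw [heval]
      omega
  -- s + 1 = M t
  have hs1 : s + 1 = M t := by
    have h_hMt : h (M t) = 0 := by
      rw [hhB (M t) (by omega), hBall (M t) le_rfl]
      omega
    have h_pos : 0 < h (M t - 1) := by
      rw [hh (M t - 1)]
      apply card_pos.mpr
      refine ⟨t, ?_⟩
      simp only [mem_filter, mem_Icc]
      have := het
      refine ⟨⟨ht, le_rfl⟩, by omega, by omega⟩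
    have hge : M t - 1 ≤ s := by
      by_contra hcon
      have := htail (M t - 1) (by omega)
      omega
    have hle' : s ≤ M t - 1 := by
      by_contra hcon
      push_neg at hcon
      have hBs := hBall s (by omega)
      have hhs0 : h s = 0 := by
        rw [hhB s (by omega), hBs]
        omega
      by_cases h2 : c ≤ s
      · have := hhs h2; omega
      · omega
    omega
  -- the S bijection
  have hScard : S.card = (((Icc 1 t) ×ˢ (Icc 1 t)).filter fun q : ℕ × ℕ =>
      q.2 ≤ q.1 ∧ e q.1 ≤ e q.2 + 1 ∧ e (q.2 - 1) < e q.1).card := by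
    apply card_bij (fun (q : Fin (t + 1) × Fin t) _ => ((q.1 : ℕ), (q.2 : ℕ) + 1))
    · intro q hq
      simp only [S, u, mem_filter, mem_univ, true_and] at hq
      obtain ⟨h1, h2, h3⟩ := hq
      have e1 := hmM q.1
      have e2 := hmM q.2.succ
      have e3 := hmM q.2.castSucc
      simp only [Fin.val_succ, Fin.coe_castSucc] at e2 e3
      rw [← e1, ← e2] at h2
      rw [← e1, ← e2, ← e3] at h3
      have b1 : (q.1 : ℕ) ≤ t := q.1.is_le
      have b2 : (q.2 : ℕ) < t := q.2.is_lt
      simp only [mem_filter, mem_product, mem_Icc, heval, Nat.add_sub_cancel]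
      refine ⟨⟨⟨by omega, by omega⟩, by omega, by omega⟩, by omega, by omega, by omega⟩
    · intro a _ b _ hab
      simp only [Prod.mk.injEq] at hab
      exact Prod.ext (Fin.ext hab.1) (Fin.ext (by omega))
    · intro q hq
      simp only [mem_filter, mem_product, mem_Icc] at hq
      obtain ⟨⟨⟨ha1, ha2⟩, hb1, hb2⟩, hle, hub, hlb⟩ := hq
      have hq1 : q.1 < t + 1 := by omega
      have hq2 : q.2 - 1 < t := by omega
      refine ⟨(⟨q.1, hq1⟩, ⟨q.2 - 1, hq2⟩), ?_, ?_⟩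
      · simp only [S, u, mem_filter, mem_univ, true_and]
        have e1 : M q.1 = m (⟨q.1, hq1⟩ : Fin (t + 1)) := hmM ⟨q.1, hq1⟩
        have e2 : M (q.2 - 1 + 1) = m (⟨q.2 - 1, hq2⟩ : Fin t).succ :=
          hmM (⟨q.2 - 1, hq2⟩ : Fin t).succ
        rw [show q.2 - 1 + 1 = q.2 from by omega] at e2
        have e3 : M (q.2 - 1) = m (⟨q.2 - 1, hq2⟩ : Fin t).castSucc :=
          hmM (⟨q.2 - 1, hq2⟩ : Fin t).castSucc
        simp only [heval] at hub hlb
        rw [← e1, ← e2, ← e3]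
        refine ⟨by omega, by omega, by omega⟩
      · have hq3 : q.2 - 1 + 1 = q.2 := by omega
        show (q.1, q.2 - 1 + 1) = q
        rw [hq3]
  -- final assembly
  have hkey := key t e ht he0 hemono
  have hseq : s = M t - 1 := by omega
  rw [hct, hseq, hScard, hkey, het]
  have hhtval : (h t : ℤ) = (t : ℤ) - Bfun t e t := by
    rw [hhB t (by omega)]
    have := hBle t
    push_cast [Nat.cast_sub this]
    ring
  have hsum : ∀ j ∈ Icc t (M t - 1), p j * p (j + 1)
      = (bfun t e j : ℤ) * bfun t e (j + 1) := by
    intro j hj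
    simp only [mem_Icc] at hj
    have hj0 : j ≠ 0 := by omega
    have hpj : p j = -(bfun t e j : ℤ) := by
      simp only [p, if_neg hj0]
      rw [hhB j (by omega), hhB (j - 1) (by omega)]
      have hbB := Bfun_succ t e j (by omega)
      have h1 := hBle j
      have h2 := hBle (j - 1)
      omega
    have hpj1 : p (j + 1) = -(bfun t e (j + 1) : ℤ) := by
      have : j + 1 ≠ 0 := by omega
      simp only [p, if_neg this, Nat.add_sub_cancel]
      rw [hhB (j + 1) (by omega), hhB j (by omega)]
      have hbB := Bfun_succ t e (j + 1) (by omega)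
      simp only [Nat.add_sub_cancel] at hbB
      have h1 := hBle (j + 1)
      have h2 := hBle j
      omega
    rw [hpj, hpj1]
    ring
  rw [Finset.sum_congr rfl hsum, hhtval]
  rw [Nat.cast_add, Nat.cast_sub (hBle t), Nat.cast_sum]
  push_cast
  ring
end
end
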